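/- arXiv:2510.03338 — 2 statements merged into one kernel-verified Lean document; each statement's English description precedes it below -/
import Mathlib

section
/- Let α > 0, μ ∈ ℝ, σ > 0 and ξ > 0. Then each of the three functions x ↦ S_μ(x) · f(x; μ,σ,ξ)^α, x ↦ S_σ(x) · f(x; μ,σ,ξ)^α, and x ↦ S_ξ(x) · f(x; μ,σ,ξ)^α is bounded on the open interval (μ − σ/ξ, ∞). -/
open MeasureTheory Real

/-- `t(x) = 1 + ξ (x-μ)/σ`. -/
noncomputable def gevT (μ σ ξ x : ℝ) : ℝ := 1 + ξ * ((x - μ) / σ)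

/-- The Generalized Extreme-Value (GEV) density with shape `ξ ≠ 0`. -/
noncomputable def gevDensity (μ σ ξ x : ℝ) : ℝ :=
  if 0 < gevT μ σ ξ x then
    σ⁻¹ * gevT μ σ ξ x ^ (-(ξ + 1) / ξ) *
      Real.exp (-(gevT μ σ ξ x ^ (-1 / ξ)))
  else 0

/-- The location score `S_μ(x) = (1/(σ t(x))) (ξ + 1 - t(x)^{-1/ξ})`. -/
noncomputable def scoreMu (μ σ ξ x : ℝ) : ℝ :=
  (σ * gevT μ σ ξ x)⁻¹ * (ξ + 1 - gevT μ σ ξ x ^ (-1 / ξ))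

/-- The scale score `S_σ(x) = -1/σ + ((x-μ)/(σ² t(x))) (ξ + 1 - t(x)^{-1/ξ})`. -/
noncomputable def scoreSigma (μ σ ξ x : ℝ) : ℝ :=
  -σ⁻¹ + ((x - μ) / (σ ^ 2 * gevT μ σ ξ x)) * (ξ + 1 - gevT μ σ ξ x ^ (-1 / ξ))

/-- The shape score
`S_ξ(x) = (1/ξ²) log t(x) (1 - t(x)^{-1/ξ}) - ((x-μ)/(ξσ t(x))) (ξ + 1 - t(x)^{-1/ξ})`. -/
noncomputable def scoreXi (μ σ ξ x : ℝ) : ℝ :=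
  (1 / ξ ^ 2) * Real.log (gevT μ σ ξ x) * (1 - gevT μ σ ξ x ^ (-1 / ξ)) -
    ((x - μ) / (ξ * σ * gevT μ σ ξ x)) * (ξ + 1 - gevT μ σ ξ x ^ (-1 / ξ))

/-!
The substitution `u = t(x)^(-1/ξ)` maps `(μ - σ/ξ, ∞)` into `(0, ∞)`; it turns `f^α` into
`σ^(-α) u^(α(ξ+1)) e^(-αu)` and each score into an expression in `u`, `u^ξ` and `log u`.
Expanding, each product `S · f^α` becomes a linear combination of `u^p e^(-αu)` with `p ≥ 0`
and `log u · u^p e^(-αu)` with `p > 0`. Each of these is continuous on `(0, ∞)` with finite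
limits at `0⁺` and at `∞`, hence bounded there.
-/

open Real Filter Set Topology Asymptotics

theorem isBigO_one_principal_Ioi_of_continuousOn {E : Type*} [SeminormedAddGroup E]
    {f : ℝ → E} {a : ℝ} (hf : ContinuousOn f (Ioi a))
    (hleft : f =O[𝓝[>] a] fun _ ↦ (1 : ℝ)) (htop : f =O[atTop] fun _ ↦ (1 : ℝ)) :
    f =O[𝓟 (Ioi a)] fun _ ↦ (1 : ℝ) := by
  obtain ⟨c₁, h₁⟩ := hleft.bound
  obtain ⟨b, hab, hb⟩ := mem_nhdsGT_iff_exists_Ioo_subset.mp h₁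
  obtain ⟨c₂, h₂⟩ := htop.bound
  obtain ⟨N, hN⟩ := eventually_atTop.mp h₂
  have hIoo : f =O[𝓟 (Ioo a b)] fun _ ↦ (1 : ℝ) := isBigO_principal.mpr ⟨c₁, hb⟩
  have hIcc : f =O[𝓟 (Icc b N)] fun _ ↦ (1 : ℝ) :=
    (hf.mono fun x hx ↦ hab.trans_le hx.1).isBigO_principal isCompact_Icc (by simp)
  have hIci : f =O[𝓟 (Ici N)] fun _ ↦ (1 : ℝ) := isBigO_principal.mpr ⟨c₂, hN⟩
  refine ((hIoo.sup hIcc).sup hIci).mono ?_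
  simp only [sup_principal, principal_mono]
  intro x (hx : a < x)
  by_cases hxb : x < b
  · exact .inl (.inl ⟨hx, hxb⟩)
  by_cases hxN : x ≤ N
  · exact .inl (.inr ⟨le_of_not_gt hxb, hxN⟩)
  · exact .inr (le_of_not_ge hxN)

theorem isBigO_rpow_mul_exp_neg_mul {p β : ℝ} (hp : 0 ≤ p) (hβ : 0 < β) :
    (fun u ↦ u ^ p * exp (-β * u)) =O[𝓟 (Ioi 0)] fun _ ↦ (1 : ℝ) := by
  have hcont : Continuous fun u : ℝ ↦ u ^ p * exp (-β * u) :=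
    (continuous_id.rpow_const fun _ ↦ .inr hp).mul (by fun_prop)
  refine isBigO_one_principal_Ioi_of_continuousOn hcont.continuousOn ?_
    ((tendsto_rpow_mul_exp_neg_mul_atTop_nhds_zero p β hβ).isBigO_one ℝ)
  exact ((hcont.tendsto 0).isBigO_one ℝ).mono nhdsWithin_le_nhds

theorem isBigO_log_mul_rpow_mul_exp_neg_mul {p β : ℝ} (hp : 0 < p) (hβ : 0 < β) :
    (fun u ↦ log u * u ^ p * exp (-β * u)) =O[𝓟 (Ioi 0)] fun _ ↦ (1 : ℝ) := by
  have hexp : Continuous fun u : ℝ ↦ exp (-β * u) := by fun_prop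
  refine isBigO_one_principal_Ioi_of_continuousOn ?_ ?_ ?_
  · exact ((continuousOn_log.mono fun u hu ↦ (ne_of_gt hu)).mul
      (continuousOn_id.rpow_const fun _ _ ↦ .inr hp.le)).mul hexp.continuousOn
  · exact (((tendsto_log_mul_rpow_nhdsGT_zero hp).mul
      ((hexp.tendsto 0).mono_left nhdsWithin_le_nhds)).isBigO_one ℝ)
  · have hlog : (fun u ↦ log u * u ^ p * exp (-β * u)) =O[atTop]
        fun u ↦ u * (u ^ p * exp (-β * u)) := by
      simpa only [mul_assoc, id] using isLittleO_log_id_atTop.isBigO.mul (isBigO_refl _ atTop)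
    refine hlog.trans ((tendsto_rpow_mul_exp_neg_mul_atTop_nhds_zero (p + 1) β hβ).isBigO_one
      ℝ |>.congr' ?_ .rfl)
    filter_upwards [eventually_gt_atTop 0] with u hu
    rw [rpow_add_one hu.ne', mul_comm u, mul_right_comm]

theorem isBigO_sub_mul_rpow_mul_exp_neg_mul {c p β : ℝ} (hp : 0 ≤ p) (hβ : 0 < β) :
    (fun u ↦ (c - u) * (u ^ p * exp (-β * u))) =O[𝓟 (Ioi 0)] fun _ ↦ (1 : ℝ) := by
  refine (((isBigO_rpow_mul_exp_neg_mul hp hβ).const_mul_left c).sub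
    (isBigO_rpow_mul_exp_neg_mul (by linarith : 0 ≤ p + 1) hβ)).congr' ?_ .rfl
  filter_upwards [mem_principal_self (Ioi 0)] with u (hu : 0 < u)
  rw [rpow_add_one hu.ne']
  ring

theorem isBigO_rpow_mul_sub_mul_rpow_mul_exp_neg_mul {a c p β : ℝ} (ha : 0 ≤ a) (hp : 0 ≤ p)
    (hβ : 0 < β) :
    (fun u ↦ u ^ a * ((c - u) * (u ^ p * exp (-β * u)))) =O[𝓟 (Ioi 0)]
      fun _ ↦ (1 : ℝ) := by
  refine (isBigO_sub_mul_rpow_mul_exp_neg_mul (c := c) (add_nonneg ha hp) hβ).congr' ?_ .rfl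
  filter_upwards [mem_principal_self (Ioi 0)] with u (hu : 0 < u)
  rw [rpow_add hu]
  ring

theorem isBigO_log_mul_sub_mul_rpow_mul_exp_neg_mul {c p β : ℝ} (hp : 0 < p) (hβ : 0 < β) :
    (fun u ↦ log u * ((c - u) * (u ^ p * exp (-β * u)))) =O[𝓟 (Ioi 0)]
      fun _ ↦ (1 : ℝ) := by
  refine (((isBigO_log_mul_rpow_mul_exp_neg_mul hp hβ).const_mul_left c).sub
    (isBigO_log_mul_rpow_mul_exp_neg_mul (by linarith : 0 < p + 1) hβ)).congr' ?_ .rfl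
  filter_upwards [mem_principal_self (Ioi 0)] with u (hu : 0 < u)
  rw [rpow_add_one hu.ne']
  ring

theorem exists_abs_le_of_eqOn_comp {g G u : ℝ → ℝ} {s t : Set ℝ}
    (hG : G =O[𝓟 t] fun _ ↦ (1 : ℝ)) (hu : MapsTo u s t) (hg : EqOn g (G ∘ u) s) :
    ∃ C, ∀ x ∈ s, |g x| ≤ C := by
  obtain ⟨C, hC⟩ := isBigO_principal.mp hG
  exact ⟨C, fun x hx ↦ by simpa [hg hx] using hC (u x) (hu hx)⟩

/-- `u = t^(-1/ξ) = -log F(x)` for the GEV distribution function `F = exp(-t^(-1/ξ))`. -/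
noncomputable def gevU (μ σ ξ x : ℝ) : ℝ := gevT μ σ ξ x ^ (-1 / ξ)

section GEV

variable {α μ σ ξ x : ℝ}

theorem gevT_pos (hσ : 0 < σ) (hξ : 0 < ξ) (hx : x ∈ Ioi (μ - σ / ξ)) :
    0 < gevT μ σ ξ x := by
  have hx' : 0 < x - (μ - σ / ξ) := sub_pos.mpr hx
  have : gevT μ σ ξ x = ξ * (x - (μ - σ / ξ)) / σ := by
    unfold gevT; field_simp; ring
  rw [this]; positivity

theorem gevU_pos (ht : 0 < gevT μ σ ξ x) : 0 < gevU μ σ ξ x := rpow_pos_of_pos ht _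

theorem gevT_inv_eq (hξ : ξ ≠ 0) (ht : 0 < gevT μ σ ξ x) :
    (gevT μ σ ξ x)⁻¹ = gevU μ σ ξ x ^ ξ := by
  rw [gevU, ← rpow_mul ht.le, div_mul_cancel₀ _ hξ, rpow_neg_one]

theorem sub_div_gevT_eq (hσ : σ ≠ 0) (hξ : ξ ≠ 0) (ht : 0 < gevT μ σ ξ x) :
    (x - μ) / gevT μ σ ξ x = σ / ξ * (1 - gevU μ σ ξ x ^ ξ) := by
  have hxμ : x - μ = σ / ξ * (gevT μ σ ξ x - 1) := by
    unfold gevT; field_simp; ring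
  rw [← gevT_inv_eq hξ ht, hxμ]
  field_simp

theorem gevDensity_rpow_eq (hσ : 0 < σ) (hξ : ξ ≠ 0) (ht : 0 < gevT μ σ ξ x) :
    gevDensity μ σ ξ x ^ α =
      σ ^ (-α) * (gevU μ σ ξ x ^ (α * (ξ + 1)) * exp (-α * gevU μ σ ξ x)) := by
  have hu := gevU_pos ht
  have h1 : gevT μ σ ξ x ^ (-(ξ + 1) / ξ) = gevU μ σ ξ x ^ (ξ + 1) := by
    rw [gevU, ← rpow_mul ht.le]
    congr 1; field_simp
  rw [gevDensity, if_pos ht, h1, mul_rpow (by positivity) (exp_nonneg _),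
    mul_rpow (by positivity) (by positivity), inv_rpow hσ.le, ← rpow_neg hσ.le,
    ← rpow_mul hu.le, ← exp_mul, ← gevU]
  ring_nf

theorem scoreMu_eq (hξ : ξ ≠ 0) (ht : 0 < gevT μ σ ξ x) :
    scoreMu μ σ ξ x = σ⁻¹ * (gevU μ σ ξ x ^ ξ * (ξ + 1 - gevU μ σ ξ x)) := by
  rw [scoreMu, mul_inv, gevT_inv_eq hξ ht, ← gevU]
  ring

theorem scoreSigma_eq (hσ : σ ≠ 0) (hξ : ξ ≠ 0) (ht : 0 < gevT μ σ ξ x) :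
    scoreSigma μ σ ξ x =
      σ⁻¹ * (-1 + (1 - gevU μ σ ξ x ^ ξ) * (ξ + 1 - gevU μ σ ξ x) / ξ) := by
  rw [scoreSigma, ← gevU, mul_comm (σ ^ 2), ← div_div, sub_div_gevT_eq hσ hξ ht]
  field_simp

theorem scoreXi_eq (hσ : σ ≠ 0) (hξ : ξ ≠ 0) (ht : 0 < gevT μ σ ξ x) :
    scoreXi μ σ ξ x = -(log (gevU μ σ ξ x) * (1 - gevU μ σ ξ x)) / ξ -
      (1 - gevU μ σ ξ x ^ ξ) * (ξ + 1 - gevU μ σ ξ x) / ξ ^ 2 := by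
  have hlog : log (gevT μ σ ξ x) = -ξ * log (gevU μ σ ξ x) := by
    rw [gevU, log_rpow ht]; field_simp
  rw [scoreXi, ← gevU, hlog, mul_comm (ξ * σ), ← div_div, sub_div_gevT_eq hσ hξ ht]
  field_simp

theorem mapsTo_gevU (hσ : 0 < σ) (hξ : 0 < ξ) :
    MapsTo (gevU μ σ ξ) (Ioi (μ - σ / ξ)) (Ioi 0) :=
  fun _ hx ↦ gevU_pos (gevT_pos hσ hξ hx)

theorem exists_abs_scoreMu_mul_gevDensity_rpow_le (hα : 0 < α) (hσ : 0 < σ) (hξ : 0 < ξ) :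
    ∃ C, ∀ x ∈ Ioi (μ - σ / ξ),
      |scoreMu μ σ ξ x * gevDensity μ σ ξ x ^ α| ≤ C := by
  have hq : 0 ≤ α * (ξ + 1) := by positivity
  refine exists_abs_le_of_eqOn_comp (G := fun u ↦
      σ⁻¹ * (u ^ ξ * (ξ + 1 - u)) * (σ ^ (-α) * (u ^ (α * (ξ + 1)) * exp (-α * u))))
    (((isBigO_rpow_mul_sub_mul_rpow_mul_exp_neg_mul (c := ξ + 1) hξ.le hq hα).const_mul_left
      (σ⁻¹ * σ ^ (-α))).congr_left fun u ↦ by ring) (mapsTo_gevU hσ hξ) fun x hx ↦ ?_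
  have ht := gevT_pos hσ hξ hx
  simp only [Function.comp, scoreMu_eq hξ.ne' ht, gevDensity_rpow_eq hσ hξ.ne' ht]

theorem exists_abs_scoreSigma_mul_gevDensity_rpow_le (hα : 0 < α) (hσ : 0 < σ) (hξ : 0 < ξ) :
    ∃ C, ∀ x ∈ Ioi (μ - σ / ξ),
      |scoreSigma μ σ ξ x * gevDensity μ σ ξ x ^ α| ≤ C := by
  have hq : 0 ≤ α * (ξ + 1) := by positivity
  have hM := isBigO_rpow_mul_exp_neg_mul hq hα
  have hD := isBigO_sub_mul_rpow_mul_exp_neg_mul (c := ξ + 1) hq hα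
  have hC := isBigO_rpow_mul_sub_mul_rpow_mul_exp_neg_mul (c := ξ + 1) hξ.le hq hα
  refine exists_abs_le_of_eqOn_comp (G := fun u ↦
      σ⁻¹ * (-1 + (1 - u ^ ξ) * (ξ + 1 - u) / ξ) *
        (σ ^ (-α) * (u ^ (α * (ξ + 1)) * exp (-α * u))))
    ((hM.neg_left.add ((hD.sub hC).const_mul_left ξ⁻¹)).const_mul_left (σ⁻¹ * σ ^ (-α))
      |>.congr_left fun u ↦ by ring) (mapsTo_gevU hσ hξ) fun x hx ↦ ?_
  have ht := gevT_pos hσ hξ hx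
  simp only [Function.comp, scoreSigma_eq hσ.ne' hξ.ne' ht, gevDensity_rpow_eq hσ hξ.ne' ht]

theorem exists_abs_scoreXi_mul_gevDensity_rpow_le (hα : 0 < α) (hσ : 0 < σ) (hξ : 0 < ξ) :
    ∃ C, ∀ x ∈ Ioi (μ - σ / ξ),
      |scoreXi μ σ ξ x * gevDensity μ σ ξ x ^ α| ≤ C := by
  have hq : 0 < α * (ξ + 1) := by positivity
  have hL := isBigO_log_mul_sub_mul_rpow_mul_exp_neg_mul (c := 1) hq hα
  have hD := isBigO_sub_mul_rpow_mul_exp_neg_mul (c := ξ + 1) hq.le hα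
  have hC := isBigO_rpow_mul_sub_mul_rpow_mul_exp_neg_mul (c := ξ + 1) hξ.le hq.le hα
  refine exists_abs_le_of_eqOn_comp (G := fun u ↦
      (-(log u * (1 - u)) / ξ - (1 - u ^ ξ) * (ξ + 1 - u) / ξ ^ 2) *
        (σ ^ (-α) * (u ^ (α * (ξ + 1)) * exp (-α * u))))
    ((hL.const_mul_left (-ξ⁻¹)).sub ((hD.sub hC).const_mul_left (ξ ^ 2)⁻¹)
      |>.const_mul_left (σ ^ (-α)) |>.congr_left fun u ↦ by ring) (mapsTo_gevU hσ hξ)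
    fun x hx ↦ ?_
  have ht := gevT_pos hσ hξ hx
  simp only [Function.comp, scoreXi_eq hσ.ne' hξ.ne' ht, gevDensity_rpow_eq hσ hξ.ne' ht]

end GEV

/-- For `ξ > 0`, each score component times `f^α` is bounded on `(μ - σ/ξ, ∞)`. -/
theorem stmt_9 (α μ σ ξ : ℝ) (hα : 0 < α) (hσ : 0 < σ) (hξ : 0 < ξ) :
    (∃ C : ℝ, ∀ x ∈ Set.Ioi (μ - σ / ξ),
      |scoreMu μ σ ξ x * gevDensity μ σ ξ x ^ α| ≤ C) ∧
    (∃ C : ℝ, ∀ x ∈ Set.Ioi (μ - σ / ξ),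
      |scoreSigma μ σ ξ x * gevDensity μ σ ξ x ^ α| ≤ C) ∧
    (∃ C : ℝ, ∀ x ∈ Set.Ioi (μ - σ / ξ),
      |scoreXi μ σ ξ x * gevDensity μ σ ξ x ^ α| ≤ C) :=
  ⟨exists_abs_scoreMu_mul_gevDensity_rpow_le hα hσ hξ,
    exists_abs_scoreSigma_mul_gevDensity_rpow_le hα hσ hξ,
    exists_abs_scoreXi_mul_gevDensity_rpow_le hα hσ hξ⟩
end

section
/- Let α > 0, μ ∈ ℝ, σ > 0 and ξ ≠ 0 with ξ > −(2α+1)/(2α+2). Then the integral over the support D of (S_μ(x)² + S_σ(x)² + S_ξ(x)²) · f(x; μ,σ,ξ)^{1+2α} is finite. -/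
open MeasureTheory Real

/-! Substituting `s = t(x) ^ (-1/ξ)` maps the support onto `(0, ∞)`, turns the density into
`σ⁻¹ s ^ (ξ + 1) e ^ (-s)` and the scores into combinations of `s ^ ξ`, `s`, `log s` and
constants. With the Jacobian `σ s ^ (-ξ - 1)` the integrand becomes
`σ ^ (-2α) s ^ (2α(ξ + 1)) e ^ (-(1 + 2α) s)` times the sum of squared scores, and the latter is
`O(s ^ (2 min(ξ, 0) - 2ε) + s ^ (2 max(ξ, 0) + 2 + 2ε))` on all of `(0, ∞)`. The exponential
absorbs the large power, and the small one is integrable at `0` as soon as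
`2α(ξ + 1) + 2 min(ξ, 0) > -1`, which is exactly the hypothesis on `ξ`. -/

open Set Filter Asymptotics

section PowerBounds

variable {p q r : ℝ}

lemma rpow_le_rpow_add_rpow {s : ℝ} (hs : 0 < s) (hp : p ≤ r) (hq : r ≤ q) :
    s ^ r ≤ s ^ p + s ^ q := by
  rcases le_total s 1 with h | h
  · linarith [rpow_le_rpow_of_exponent_ge hs h hp, (rpow_pos_of_pos hs q).le]
  · linarith [rpow_le_rpow_of_exponent_le h hq, (rpow_pos_of_pos hs p).le]

lemma isBigO_rpow_add_rpow_of_abs_le {f : ℝ → ℝ} (C : ℝ)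
    (h : ∀ s, 0 < s → |f s| ≤ C * (s ^ p + s ^ q)) :
    f =O[𝓟 (Ioi 0)] fun s => s ^ p + s ^ q :=
  IsBigO.of_bound C <| eventually_principal.2 fun s (hs : 0 < s) => by
    rw [Real.norm_eq_abs, Real.norm_of_nonneg (by positivity)]
    exact h s hs

lemma rpow_isBigO_rpow_add_rpow (hp : p ≤ r) (hq : r ≤ q) :
    (fun s : ℝ => s ^ r) =O[𝓟 (Ioi 0)] fun s => s ^ p + s ^ q :=
  isBigO_rpow_add_rpow_of_abs_le 1 fun s hs => by
    rw [abs_of_pos (rpow_pos_of_pos hs r), one_mul]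
    exact rpow_le_rpow_add_rpow hs hp hq

lemma const_isBigO_rpow_add_rpow (c : ℝ) (hp : p ≤ 0) (hq : 0 ≤ q) :
    (fun _ : ℝ => c) =O[𝓟 (Ioi 0)] fun s => s ^ p + s ^ q := by
  simpa using (rpow_isBigO_rpow_add_rpow hp hq).const_mul_left c

lemma const_sub_isBigO_rpow_add_rpow (c : ℝ) (hp : p ≤ 0) (hq : 1 ≤ q) :
    (fun s : ℝ => c - s) =O[𝓟 (Ioi 0)] fun s => s ^ p + s ^ q := by
  refine (const_isBigO_rpow_add_rpow c hp (by linarith)).sub ?_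
  simpa using rpow_isBigO_rpow_add_rpow (r := 1) (by linarith) hq

lemma log_isBigO_rpow_add_rpow {ε : ℝ} (hε : 0 < ε) :
    log =O[𝓟 (Ioi 0)] fun s => s ^ (-ε) + s ^ ε :=
  isBigO_rpow_add_rpow_of_abs_le ε⁻¹ fun s hs => by
    have hinv : log s⁻¹ ≤ s⁻¹ ^ ε / ε := log_le_rpow_div (inv_nonneg.2 hs.le) hε
    rw [log_inv, inv_rpow hs.le, ← rpow_neg hs.le] at hinv
    have hlog : log s ≤ s ^ ε / ε := log_le_rpow_div hs.le hε
    have hpos := div_nonneg (rpow_pos_of_pos hs ε).le hε.le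
    have hpos' := div_nonneg (rpow_pos_of_pos hs (-ε)).le hε.le
    calc |log s| ≤ s ^ (-ε) / ε + s ^ ε / ε := abs_le.2 ⟨by linarith, by linarith⟩
      _ = ε⁻¹ * (s ^ (-ε) + s ^ ε) := by ring

lemma rpow_add_rpow_isBigO_rpow_add_rpow {p' q' : ℝ} (hp : p' ≤ p) (hpq : p ≤ q) (hq : q ≤ q') :
    (fun s : ℝ => s ^ p + s ^ q) =O[𝓟 (Ioi 0)] fun s => s ^ p' + s ^ q' :=
  (rpow_isBigO_rpow_add_rpow hp (hpq.trans hq)).add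
    (rpow_isBigO_rpow_add_rpow (hp.trans hpq) hq)

lemma Asymptotics.IsBigO.mul_rpow_add_rpow {f g : ℝ → ℝ} {p' q' : ℝ}
    (hf : f =O[𝓟 (Ioi 0)] fun s => s ^ p + s ^ q)
    (hg : g =O[𝓟 (Ioi 0)] fun s => s ^ p' + s ^ q') (hpq : p ≤ q) (hpq' : p' ≤ q') :
    (fun s => f s * g s) =O[𝓟 (Ioi 0)] fun s => s ^ (p + p') + s ^ (q + q') := by
  refine (hf.mul hg).trans (isBigO_rpow_add_rpow_of_abs_le 3 fun s hs => ?_)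
  have hmid₁ := rpow_le_rpow_add_rpow hs (p := p + p') (q := q + q') (r := p + q')
    (by linarith) (by linarith)
  have hmid₂ := rpow_le_rpow_add_rpow hs (p := p + p') (q := q + q') (r := q + p')
    (by linarith) (by linarith)
  rw [abs_of_pos (by positivity)]
  simp only [rpow_add hs] at hmid₁ hmid₂ ⊢
  nlinarith

end PowerBounds

lemma rpow_isBigO_rpow_min_add_rpow_max (ξ : ℝ) :
    (fun s : ℝ => s ^ ξ) =O[𝓟 (Ioi 0)] fun s => s ^ min ξ 0 + s ^ max ξ 0 :=
  rpow_isBigO_rpow_add_rpow (min_le_left ξ 0) (le_max_left ξ 0)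

lemma one_sub_rpow_mul_const_sub_isBigO (ξ c : ℝ) :
    (fun s : ℝ => (1 - s ^ ξ) * (c - s)) =O[𝓟 (Ioi 0)]
      fun s => s ^ min ξ 0 + s ^ (max ξ 0 + 1) := by
  simpa only [add_zero] using
    ((const_isBigO_rpow_add_rpow 1 (min_le_right ξ 0) (le_max_right ξ 0)).sub
      (rpow_isBigO_rpow_min_add_rpow_max ξ)).mul_rpow_add_rpow
      (const_sub_isBigO_rpow_add_rpow c le_rfl le_rfl) min_le_max zero_le_one

lemma integrableOn_Ioi_mul_exp_neg_mul_of_isBigO {f : ℝ → ℝ} {p q c : ℝ}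
    (hfm : AEStronglyMeasurable f (volume.restrict (Ioi 0)))
    (hf : f =O[𝓟 (Ioi 0)] fun s => s ^ p + s ^ q) (hp : -1 < p) (hq : -1 < q) (hc : 0 < c) :
    IntegrableOn (fun s => f s * exp (-c * s)) (Ioi 0) := by
  have hmajorant : IntegrableOn (fun s => (s ^ p + s ^ q) * exp (-c * s)) (Ioi 0) := by
    simpa only [add_mul, rpow_one, Pi.add_def] using
      (integrableOn_rpow_mul_exp_neg_mul_rpow hp one_pos hc).add
        (integrableOn_rpow_mul_exp_neg_mul_rpow hq one_pos hc)
  obtain ⟨C, hC⟩ := isBigO_principal.1 (hf.mul (isBigO_refl (fun s => exp (-c * s)) _))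
  refine (hmajorant.norm.const_mul C).mono' (hfm.mul (by fun_prop)) ?_
  exact (ae_restrict_iff' measurableSet_Ioi).2 (.of_forall hC)

/-- The point `x` with `t(x) ^ (-1/ξ) = s`, i.e. the GEV quantile at level `exp (-s)`. -/
noncomputable def gevQuantile (μ σ ξ s : ℝ) : ℝ := μ + σ * (s ^ (-ξ) - 1) / ξ

section GEV

variable {μ σ ξ : ℝ}

lemma rpow_neg_rpow_neg_one_div {s : ℝ} (hs : 0 ≤ s) (hξ : ξ ≠ 0) :
    (s ^ (-ξ)) ^ (-1 / ξ) = s := by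
  rw [← rpow_mul hs, show -ξ * (-1 / ξ) = 1 by field_simp, rpow_one]

lemma gevT_gevQuantile (hσ : σ ≠ 0) (hξ : ξ ≠ 0) (s : ℝ) :
    gevT μ σ ξ (gevQuantile μ σ ξ s) = s ^ (-ξ) := by
  unfold gevT gevQuantile
  field_simp
  ring

lemma gevQuantile_gevT_rpow (hσ : σ ≠ 0) (hξ : ξ ≠ 0) {x : ℝ} (hx : 0 < gevT μ σ ξ x) :
    gevQuantile μ σ ξ (gevT μ σ ξ x ^ (-1 / ξ)) = x := by
  rw [gevQuantile, ← rpow_mul hx.le, show -1 / ξ * -ξ = 1 by field_simp, rpow_one, gevT]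
  field_simp
  ring

lemma bijOn_gevQuantile (hσ : σ ≠ 0) (hξ : ξ ≠ 0) :
    BijOn (gevQuantile μ σ ξ) (Ioi 0) {x | 0 < gevT μ σ ξ x} := by
  refine InvOn.bijOn (f' := fun x => gevT μ σ ξ x ^ (-1 / ξ)) ⟨fun s (hs : 0 < s) => ?_,
    fun x hx => gevQuantile_gevT_rpow hσ hξ hx⟩ (fun s (hs : 0 < s) => ?_)
    (fun x (hx : 0 < gevT μ σ ξ x) => rpow_pos_of_pos hx _)
  · simp only [gevT_gevQuantile hσ hξ, rpow_neg_rpow_neg_one_div hs.le hξ]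
  · simpa only [mem_ofPred_eq, gevT_gevQuantile hσ hξ] using rpow_pos_of_pos hs _

lemma hasDerivAt_gevQuantile (hξ : ξ ≠ 0) {s : ℝ} (hs : 0 < s) :
    HasDerivAt (gevQuantile μ σ ξ) (-σ * s ^ (-ξ - 1)) s := by
  refine ((((hasDerivAt_rpow_const (Or.inl hs.ne')).sub_const 1).const_mul σ).div_const
    ξ |>.const_add μ).congr_deriv ?_
  field_simp

lemma gevDensity_gevQuantile (hσ : σ ≠ 0) (hξ : ξ ≠ 0) {s : ℝ} (hs : 0 < s) :
    gevDensity μ σ ξ (gevQuantile μ σ ξ s) = σ⁻¹ * s ^ (ξ + 1) * exp (-s) := by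
  rw [gevDensity, gevT_gevQuantile hσ hξ, if_pos (rpow_pos_of_pos hs _),
    rpow_neg_rpow_neg_one_div hs.le hξ, ← rpow_mul hs.le,
    show -ξ * (-(ξ + 1) / ξ) = ξ + 1 by field_simp]

lemma scoreMu_gevQuantile (hσ : σ ≠ 0) (hξ : ξ ≠ 0) {s : ℝ} (hs : 0 < s) :
    scoreMu μ σ ξ (gevQuantile μ σ ξ s) = σ⁻¹ * (s ^ ξ * (ξ + 1 - s)) := by
  rw [scoreMu, gevT_gevQuantile hσ hξ, rpow_neg_rpow_neg_one_div hs.le hξ, rpow_neg hs.le]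
  field_simp

lemma scoreSigma_gevQuantile (hσ : σ ≠ 0) (hξ : ξ ≠ 0) {s : ℝ} (hs : 0 < s) :
    scoreSigma μ σ ξ (gevQuantile μ σ ξ s) =
      σ⁻¹ * (-1 + ξ⁻¹ * ((1 - s ^ ξ) * (ξ + 1 - s))) := by
  rw [scoreSigma, gevT_gevQuantile hσ hξ, rpow_neg_rpow_neg_one_div hs.le hξ, gevQuantile,
    rpow_neg hs.le]
  field_simp
  ring

lemma scoreXi_gevQuantile (hσ : σ ≠ 0) (hξ : ξ ≠ 0) {s : ℝ} (hs : 0 < s) :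
    scoreXi μ σ ξ (gevQuantile μ σ ξ s) =
      -ξ⁻¹ * (log s * (1 - s)) - (ξ ^ 2)⁻¹ * ((1 - s ^ ξ) * (ξ + 1 - s)) := by
  rw [scoreXi, gevT_gevQuantile hσ hξ, rpow_neg_rpow_neg_one_div hs.le hξ, gevQuantile,
    log_rpow hs, rpow_neg hs.le]
  field_simp
  ring

lemma scoreMu_gevQuantile_isBigO (hσ : σ ≠ 0) (hξ : ξ ≠ 0) :
    (fun s => scoreMu μ σ ξ (gevQuantile μ σ ξ s)) =O[𝓟 (Ioi 0)]
      fun s => s ^ min ξ 0 + s ^ (max ξ 0 + 1) := by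
  have h := (rpow_isBigO_rpow_min_add_rpow_max ξ).mul_rpow_add_rpow
    (const_sub_isBigO_rpow_add_rpow (ξ + 1) le_rfl le_rfl) min_le_max zero_le_one
  rw [add_zero] at h
  exact (h.const_mul_left σ⁻¹).congr'
    (eventuallyEq_principal.2 fun _ hs => (scoreMu_gevQuantile hσ hξ hs).symm) EventuallyEq.rfl

lemma scoreSigma_gevQuantile_isBigO (hσ : σ ≠ 0) (hξ : ξ ≠ 0) :
    (fun s => scoreSigma μ σ ξ (gevQuantile μ σ ξ s)) =O[𝓟 (Ioi 0)]
      fun s => s ^ min ξ 0 + s ^ (max ξ 0 + 1) :=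
  (((const_isBigO_rpow_add_rpow (-1) (by simp) (by positivity)).add
    ((one_sub_rpow_mul_const_sub_isBigO ξ (ξ + 1)).const_mul_left ξ⁻¹)).const_mul_left
    σ⁻¹).congr' (eventuallyEq_principal.2 fun _ hs => (scoreSigma_gevQuantile hσ hξ hs).symm)
    EventuallyEq.rfl

lemma scoreXi_gevQuantile_isBigO (hσ : σ ≠ 0) (hξ : ξ ≠ 0) {ε : ℝ} (hε : 0 < ε) :
    (fun s => scoreXi μ σ ξ (gevQuantile μ σ ξ s)) =O[𝓟 (Ioi 0)]
      fun s => s ^ (min ξ 0 - ε) + s ^ (max ξ 0 + 1 + ε) := by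
  have hlog := ((log_isBigO_rpow_add_rpow hε).mul_rpow_add_rpow
    (const_sub_isBigO_rpow_add_rpow 1 le_rfl le_rfl) (by linarith) zero_le_one).trans
    (rpow_add_rpow_isBigO_rpow_add_rpow (p' := min ξ 0 - ε) (q' := max ξ 0 + 1 + ε)
      (by linarith [min_le_right ξ 0]) (by linarith) (by linarith [le_max_right ξ 0]))
  have hpoly := (one_sub_rpow_mul_const_sub_isBigO ξ (ξ + 1)).trans
    (rpow_add_rpow_isBigO_rpow_add_rpow (p' := min ξ 0 - ε) (q' := max ξ 0 + 1 + ε) (by linarith)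
      (by linarith [min_le_max (a := ξ) (b := 0)]) (by linarith))
  exact ((hlog.const_mul_left (-ξ⁻¹)).sub (hpoly.const_mul_left (ξ ^ 2)⁻¹)).congr'
    (eventuallyEq_principal.2 fun _ hs => (scoreXi_gevQuantile hσ hξ hs).symm) EventuallyEq.rfl

lemma scoreSqSum_gevQuantile_isBigO {ε : ℝ} (hσ : σ ≠ 0) (hξ : ξ ≠ 0) (hε : 0 < ε) :
    (fun s => scoreMu μ σ ξ (gevQuantile μ σ ξ s) ^ 2 +
        scoreSigma μ σ ξ (gevQuantile μ σ ξ s) ^ 2 + scoreXi μ σ ξ (gevQuantile μ σ ξ s) ^ 2)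
      =O[𝓟 (Ioi 0)] fun s => s ^ ((min ξ 0 - ε) + (min ξ 0 - ε)) +
        s ^ ((max ξ 0 + 1 + ε) + (max ξ 0 + 1 + ε)) := by
  have hpq : min ξ 0 - ε ≤ max ξ 0 + 1 + ε := by linarith [min_le_max (a := ξ) (b := 0)]
  have hsq {S : ℝ → ℝ} (h : S =O[𝓟 (Ioi 0)] fun s => s ^ (min ξ 0 - ε) + s ^ (max ξ 0 + 1 + ε)) :
      (fun s => S s ^ 2) =O[𝓟 (Ioi 0)] fun s => s ^ ((min ξ 0 - ε) + (min ξ 0 - ε)) +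
        s ^ ((max ξ 0 + 1 + ε) + (max ξ 0 + 1 + ε)) :=
    (h.mul_rpow_add_rpow h hpq hpq).congr_left fun s => (sq (S s)).symm
  have hwiden := rpow_add_rpow_isBigO_rpow_add_rpow (p := min ξ 0) (q := max ξ 0 + 1)
    (p' := min ξ 0 - ε) (q' := max ξ 0 + 1 + ε) (by linarith)
    (by linarith [min_le_max (a := ξ) (b := 0)]) (by linarith)
  exact ((hsq ((scoreMu_gevQuantile_isBigO hσ hξ).trans hwiden)).add
    (hsq ((scoreSigma_gevQuantile_isBigO hσ hξ).trans hwiden))).add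
    (hsq (scoreXi_gevQuantile_isBigO hσ hξ hε))

lemma abs_mul_gevDensity_gevQuantile_rpow {α s : ℝ} (hσ : 0 < σ) (hξ : ξ ≠ 0)
    (hs : 0 < s) (A : ℝ) :
    |-σ * s ^ (-ξ - 1)| * (A * gevDensity μ σ ξ (gevQuantile μ σ ξ s) ^ (1 + 2 * α)) =
      σ ^ (-(2 * α)) * (s ^ (2 * α * (ξ + 1)) * A * exp (-(1 + 2 * α) * s)) := by
  rw [gevDensity_gevQuantile hσ.ne' hξ hs,
    abs_of_neg (mul_neg_of_neg_of_pos (neg_neg_of_pos hσ) (rpow_pos_of_pos hs _)),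
    mul_rpow (by positivity) (exp_pos _).le, mul_rpow (by positivity) (by positivity),
    inv_rpow hσ.le, ← rpow_neg hσ.le, ← rpow_mul hs.le, ← exp_mul,
    show -(2 * α) = 1 + -(1 + 2 * α) by ring, rpow_add hσ, rpow_one,
    show 2 * α * (ξ + 1) = (-ξ - 1) + (ξ + 1) * (1 + 2 * α) by ring, rpow_add hs]
  ring_nf

end GEV

/-- For `ξ ≠ 0` with `ξ > -(2α+1)/(2α+2)`, the integral over the support `D` of
`(S_μ² + S_σ² + S_ξ²) f^{1+2α}` is finite. -/
theorem stmt_12 (α μ σ ξ : ℝ) (hα : 0 < α) (hσ : 0 < σ) (hξ0 : ξ ≠ 0)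
    (hξ : ξ > -(2 * α + 1) / (2 * α + 2)) :
    IntegrableOn
      (fun x => (scoreMu μ σ ξ x ^ 2 + scoreSigma μ σ ξ x ^ 2 + scoreXi μ σ ξ x ^ 2) *
        gevDensity μ σ ξ x ^ (1 + 2 * α))
      {x : ℝ | 0 < gevT μ σ ξ x} := by
  have hbij := bijOn_gevQuantile (μ := μ) hσ.ne' hξ0
  rw [← hbij.image_eq, integrableOn_image_iff_integrableOn_abs_deriv_smul measurableSet_Ioi
    (fun s hs => (hasDerivAt_gevQuantile hξ0 hs).hasDerivWithinAt) hbij.injOn]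
  obtain ⟨ε, hε, hεβ⟩ : ∃ ε > 0, -1 < 2 * α * (ξ + 1) + 2 * (min ξ 0 - ε) := by
    have := (div_lt_iff₀ (by linarith : (0 : ℝ) < 2 * α + 2)).1 hξ
    have hβ : -1 < 2 * α * (ξ + 1) + 2 * min ξ 0 := by
      rcases min_cases ξ 0 with ⟨h, -⟩ | ⟨h, -⟩ <;> rw [h] <;> nlinarith
    exact ⟨(2 * α * (ξ + 1) + 2 * min ξ 0 + 1) / 4, by linarith, by linarith⟩
  have hmin_le_max := min_le_max (a := ξ) (b := 0)
  have hbigO := ((rpow_isBigO_rpow_add_rpow (p := 2 * α * (ξ + 1)) le_rfl le_rfl).mul_rpow_add_rpow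
    (scoreSqSum_gevQuantile_isBigO (μ := μ) hσ.ne' hξ0 hε) le_rfl (by linarith))
  have hmeas : AEStronglyMeasurable (fun s => s ^ (2 * α * (ξ + 1)) *
      (scoreMu μ σ ξ (gevQuantile μ σ ξ s) ^ 2 + scoreSigma μ σ ξ (gevQuantile μ σ ξ s) ^ 2 +
        scoreXi μ σ ξ (gevQuantile μ σ ξ s) ^ 2)) (volume.restrict (Ioi 0)) := by
    unfold scoreMu scoreSigma scoreXi gevT gevQuantile
    fun_prop
  refine IntegrableOn.congr_fun ((integrableOn_Ioi_mul_exp_neg_mul_of_isBigO hmeas hbigO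
    (by linarith) (by linarith) (by positivity : 0 < 1 + 2 * α)).const_mul (σ ^ (-(2 * α))))
    (fun s (hs : 0 < s) => ?_) measurableSet_Ioi
  rw [smul_eq_mul, abs_mul_gevDensity_gevQuantile_rpow hσ hξ0 hs, mul_assoc (s ^ _)]
end
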